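/- For a vaccinated set S and node u with closest ancestor v in S, the set identity N_u ∩ ∪_{j ∈ N_v ∩ S} N_j = N_u ∩ ∪_{j ∈ N_u ∩ S} N_j holds. -/

import Mathlib

open MeasureTheory ProbabilityTheory

/-- A finite rooted tree given by a parent function. -/
structure ParentTree (V : Type*) where
  root : V
  parent : V → V
  parent_root : parent root = root
  reaches_root : ∀ v, ∃ n, parent^[n] v = root
  acyclic : ∀ v n, 0 < n → parent^[n] v = v → v = root

namespace ParentTree

variable {V : Type*}

/-- `anc i j` : `i` is a strict ancestor of `j`. -/
def anc (T : ParentTree V) (i j : V) : Prop :=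
  i ≠ j ∧ ∃ n, T.parent^[n] j = i

/-- The set of strict descendants of `i`. -/
def desc (T : ParentTree V) (i : V) : Set V := {v | T.anc i v}

/-- The number of strict descendants of `i`. -/
noncomputable def nd (T : ParentTree V) (i : V) : ℕ := (T.desc i).ncard

/-- The expected total reward of vaccinating the set `S`, where `p i = P(Z_i > τ)`. -/
noncomputable def reward (T : ParentTree V) (p : V → ℝ) (S : Finset V) : ℝ :=
  ∑ i ∈ S, ((T.nd i : ℝ) - ((⋃ j ∈ T.desc i ∩ (S : Set V), T.desc j).ncard : ℝ)) * p i

end ParentTree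

open ParentTree

/-!
Any `j ∈ S ∩ N_v` sharing a descendant with `u` is comparable with `u`, since ancestors of a
common node form a chain. It is not `u` (as `u ∉ S`) and not a strict ancestor of `u` (as no
node of `S` lies strictly between `v` and `u`), so `j ∈ N_u`; conversely `N_u ⊆ N_v`.
-/

namespace ParentTree

variable {V : Type*} (T : ParentTree V)

theorem anc_trans {i j k : V} (hij : T.anc i j) (hjk : T.anc j k) : T.anc i k := by
  obtain ⟨hne_ij, n, hn⟩ := hij
  obtain ⟨hne_jk, m, hm⟩ := hjk
  have hnm : T.parent^[n + m] k = i := by rw [Function.iterate_add_apply, hm, hn]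
  refine ⟨?_, n + m, hnm⟩
  rintro rfl
  have hn_pos : 0 < n := Nat.pos_of_ne_zero fun h ↦ hne_ij (by simpa [h] using hn.symm)
  -- a cycle through `i` forces `i` to be the root, which is fixed by `parent`, so `j = i`
  have hroot : i = T.root := T.acyclic i (n + m) (by omega) hnm
  rw [hroot, Function.iterate_fixed T.parent_root] at hm
  exact hne_jk (hroot.trans hm).symm

theorem eq_or_anc_or_anc_of_anc_of_anc {i j x : V} (hix : T.anc i x) (hjx : T.anc j x) :
    i = j ∨ T.anc i j ∨ T.anc j i := by
  obtain ⟨-, n, hn⟩ := hix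
  obtain ⟨-, m, hm⟩ := hjx
  rcases eq_or_ne i j with rfl | hij
  · exact Or.inl rfl
  rcases le_total n m with h | h
  · refine Or.inr <| Or.inr ⟨hij.symm, m - n, ?_⟩
    rw [← hn, ← Function.iterate_add_apply, Nat.sub_add_cancel h, hm]
  · refine Or.inr <| Or.inl ⟨hij, n - m, ?_⟩
    rw [← hm, ← Function.iterate_add_apply, Nat.sub_add_cancel h, hn]

theorem desc_subset_desc_of_anc {i j : V} (hij : T.anc i j) : T.desc j ⊆ T.desc i :=
  fun _ hjx ↦ T.anc_trans hij hjx

end ParentTree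

theorem desc_inter_union_closest_ancestor_general {V : Type*}
    (T : ParentTree V) (S : Finset V) (u v : V) (hu : u ∉ S) (hvu : T.anc v u)
    (hclosest : ∀ a ∈ S, T.anc a u → ¬ T.anc v a) :
    T.desc u ∩ ⋃ j ∈ T.desc v ∩ (S : Set V), T.desc j
      = T.desc u ∩ ⋃ j ∈ T.desc u ∩ (S : Set V), T.desc j := by
  ext x
  simp only [Set.mem_inter_iff, Set.mem_iUnion, exists_prop]
  constructor
  · rintro ⟨hux, j, ⟨hvj, hjS⟩, hjx⟩
    have huj : T.anc u j := by
      rcases T.eq_or_anc_or_anc_of_anc_of_anc hux hjx with rfl | huj | hju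
      · exact absurd hjS hu
      · exact huj
      · exact absurd hvj (hclosest j hjS hju)
    exact ⟨hux, j, ⟨huj, hjS⟩, hjx⟩
  · rintro ⟨hux, j, ⟨huj, hjS⟩, hjx⟩
    exact ⟨hux, j, ⟨T.desc_subset_desc_of_anc hvu huj, hjS⟩, hjx⟩

/-- For a vaccinated set `S` and a node `u ∉ S` whose closest ancestor in `S` is `v`
(no node of `S` lies strictly between `v` and `u`), the set identity
`N_u ∩ ∪_{j ∈ N_v ∩ S} N_j = N_u ∩ ∪_{j ∈ N_u ∩ S} N_j` holds. -/
theorem desc_inter_union_closest_ancestor {V : Type*} [Fintype V] [DecidableEq V]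
    (T : ParentTree V) (S : Finset V) (u v : V) (hu : u ∉ S) (hvu : T.anc v u)
    (hclosest : ∀ a ∈ S, T.anc a u → ¬ T.anc v a) :
    T.desc u ∩ ⋃ j ∈ T.desc v ∩ (S : Set V), T.desc j
      = T.desc u ∩ ⋃ j ∈ T.desc u ∩ (S : Set V), T.desc j :=
  desc_inter_union_closest_ancestor_general T S u v hu hvu hclosest
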